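/- Let G be a locally triangle-free graph in W₂ and let ab be an edge of G. Then G_{ab} := G \ N_G[{a,b}] is either the empty graph or is well-covered with α(G_{ab}) = α(G) − 1. -/

import Mathlib

/-!
Let `S` be a maximal independent set of `G_{ab}`. Then `S ∪ {a}` is a maximal independent set of
`G - b`, so `|S| + 1 = α(G - b) = α(G)`. Indeed, a vertex `v` that could be added to `S ∪ {a}` must
be adjacent to `b` by maximality of `S`. Extend `S ∪ {a, v}` to a maximal independent set `M` of
`G`. Since `G - v` is well-covered with `α(G - v) = α(G)`, the set `M \ {v}` is not maximal in
`G - v`, which gives a private neighbour `u ∉ M` of `v`. Again by maximality of `S`, `u` is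
adjacent to `b`, so `b, u, v` is a triangle in `G_w` for any `w ∈ S`.
-/

open Set

variable {V : Type*}

/-- `S` is an independent set of `G` contained in the vertex subset `W`
(i.e. an independent set of the induced subgraph `G[W]`). -/
def IsIndepOn (G : SimpleGraph V) (W S : Set V) : Prop :=
  S ⊆ W ∧ ∀ ⦃x⦄, x ∈ S → ∀ ⦃y⦄, y ∈ S → ¬ G.Adj x y

/-- `S` is a maximal independent set of the induced subgraph `G[W]`. -/
def MaxIndepOn (G : SimpleGraph V) (W : Set V) (S : Finset V) : Prop :=
  IsIndepOn G W ↑S ∧ ∀ v ∈ W, v ∉ S → ¬ IsIndepOn G W (insert v ↑S)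

/-- The independence number of the induced subgraph `G[W]`. -/
noncomputable def indepNumOn (G : SimpleGraph V) (W : Set V) : ℕ :=
  sSup {n | ∃ S : Finset V, IsIndepOn G W ↑S ∧ S.card = n}

/-- The induced subgraph `G[W]` is well-covered: every maximal independent set
has cardinality equal to the independence number. -/
def WellCoveredOn (G : SimpleGraph V) (W : Set V) : Prop :=
  ∀ S : Finset V, MaxIndepOn G W S → S.card = indepNumOn G W

/-- The independence number `α(G)`. -/
noncomputable def indepNum (G : SimpleGraph V) : ℕ := indepNumOn G Set.univ

/-- `G` is well-covered. -/
def WellCovered (G : SimpleGraph V) : Prop := WellCoveredOn G Set.univ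

/-- The induced subgraph `G[W]` has no isolated vertices. -/
def NoIsolatedOn (G : SimpleGraph V) (W : Set V) : Prop :=
  ∀ v ∈ W, ∃ u ∈ W, G.Adj v u

/-- The induced subgraph `G[W]` is in the class `W₂`: it has no isolated
vertices, is well-covered, and removing any vertex leaves a well-covered graph
with the same independence number. -/
def W2On (G : SimpleGraph V) (W : Set V) : Prop :=
  NoIsolatedOn G W ∧ WellCoveredOn G W ∧
    ∀ v ∈ W, WellCoveredOn G (W \ {v}) ∧ indepNumOn G (W \ {v}) = indepNumOn G W

/-- `G` is in the class `W₂`. -/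
def W2 (G : SimpleGraph V) : Prop := W2On G Set.univ

/-- The closed neighborhood `N_G[S]` of a set of vertices `S`. -/
def nbhd (G : SimpleGraph V) (S : Set V) : Set V :=
  {v | v ∈ S ∨ ∃ u ∈ S, G.Adj u v}

/-- The vertex set of `G_S = G \ N_G[S]`. -/
def GDel (G : SimpleGraph V) (S : Set V) : Set V := Set.univ \ nbhd G S

/-- The induced subgraph `G[W]` is triangle-free. -/
def TriangleFreeOn (G : SimpleGraph V) (W : Set V) : Prop :=
  ∀ x ∈ W, ∀ y ∈ W, ∀ z ∈ W, ¬ (G.Adj x y ∧ G.Adj y z ∧ G.Adj x z)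

/-- `G` is locally triangle-free: `G_v` is triangle-free for every vertex `v`. -/
def LocallyTriangleFree (G : SimpleGraph V) : Prop :=
  ∀ v : V, TriangleFreeOn G (GDel G {v})

/-- `G` is a join of two proper (nonempty, disjoint) subgraphs. -/
def IsJoin (G : SimpleGraph V) : Prop :=
  ∃ V₁ V₂ : Set V, V₁.Nonempty ∧ V₂.Nonempty ∧ Disjoint V₁ V₂ ∧ V₁ ∪ V₂ = Set.univ ∧
    ∀ x ∈ V₁, ∀ y ∈ V₂, G.Adj x y


section

variable {G : SimpleGraph V} {W S : Set V} {a b v x : V}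

lemma mem_GDel : x ∈ GDel G S ↔ x ∉ S ∧ ∀ u ∈ S, ¬ G.Adj u x := by
  simp [GDel, nbhd]

lemma mem_GDel_singleton : x ∈ GDel G {v} ↔ x ≠ v ∧ ¬ G.Adj v x := by
  simp [mem_GDel]

lemma mem_GDel_pair : x ∈ GDel G {a, b} ↔ x ≠ a ∧ x ≠ b ∧ ¬ G.Adj a x ∧ ¬ G.Adj b x := by
  simp [mem_GDel]
  tauto

lemma IsIndepOn.mono {W' : Set V} (hS : IsIndepOn G W S) (hW : W ⊆ W') : IsIndepOn G W' S :=
  ⟨hS.1.trans hW, hS.2⟩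

lemma isIndepOn_insert :
    IsIndepOn G W (insert v S) ↔ v ∈ W ∧ IsIndepOn G W S ∧ ∀ x ∈ S, ¬ G.Adj v x := by
  constructor
  · rintro ⟨hsub, hind⟩
    exact ⟨hsub (mem_insert _ _),
      ⟨(subset_insert _ _).trans hsub,
        fun x hx y hy => hind (mem_insert_of_mem _ hx) (mem_insert_of_mem _ hy)⟩,
      fun x hx => hind (mem_insert _ _) (mem_insert_of_mem _ hx)⟩
  · rintro ⟨hv, ⟨hsub, hind⟩, hvS⟩
    refine ⟨insert_subset hv hsub, ?_⟩
    rintro x (rfl | hx) y (rfl | hy) hxy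
    · exact G.loopless.irrefl _ hxy
    · exact hvS y hy hxy
    · exact hvS x hx hxy.symm
    · exact hind hx hy hxy

lemma MaxIndepOn.exists_adj {M : Finset V} (hM : MaxIndepOn G W M) (hv : v ∈ W) (hvM : v ∉ M) :
    ∃ x ∈ M, G.Adj v x := by
  by_contra! h
  exact hM.2 v hv hvM (isIndepOn_insert.2 ⟨hv, hM.1, h⟩)

lemma exists_maxIndepOn_superset [Finite V] {T : Finset V} (hT : IsIndepOn G W T) :
    ∃ M : Finset V, T ⊆ M ∧ MaxIndepOn G W M := by
  classical
  obtain ⟨M, hTM, hM⟩ := Finite.exists_le_maximal (p := fun M : Finset V => IsIndepOn G W M) hT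
  refine ⟨M, hTM, hM.prop, fun v hv hvM hins => hvM ?_⟩
  rw [← Finset.coe_insert] at hins
  exact hM.le_of_ge hins (Finset.subset_insert v M) (Finset.mem_insert_self v M)

lemma card_le_indepNumOn [Finite V] {T : Finset V} (hT : IsIndepOn G W T) :
    T.card ≤ indepNumOn G W := by
  have := Fintype.ofFinite V
  exact le_csSup ⟨Fintype.card V, by rintro n ⟨S, -, rfl⟩; exact S.card_le_univ⟩ ⟨T, hT, rfl⟩

lemma MaxIndepOn.nonempty {M : Finset V} (hM : MaxIndepOn G W M) (hW : W.Nonempty) :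
    M.Nonempty := by
  obtain ⟨v, hv⟩ := hW
  by_cases hvM : v ∈ M
  · exact ⟨v, hvM⟩
  · obtain ⟨x, hx, -⟩ := hM.exists_adj hv hvM
    exact ⟨x, hx⟩

lemma wellCoveredOn_of_forall_card_eq [Finite V] {k : ℕ}
    (h : ∀ M : Finset V, MaxIndepOn G W M → M.card = k) :
    WellCoveredOn G W ∧ indepNumOn G W = k := by
  have hempty : IsIndepOn G W ((∅ : Finset V) : Set V) := ⟨by simp, by simp⟩
  obtain ⟨M, -, hM⟩ := exists_maxIndepOn_superset hempty
  have hα : indepNumOn G W = k := by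
    refine le_antisymm (csSup_le ⟨0, ∅, hempty, rfl⟩ ?_) (h M hM ▸ card_le_indepNumOn hM.1)
    rintro n ⟨T, hT, rfl⟩
    obtain ⟨M', hTM', hM'⟩ := exists_maxIndepOn_superset hT
    exact h M' hM' ▸ Finset.card_le_card hTM'
  exact ⟨fun M hM => hα ▸ h M hM, hα⟩

lemma MaxIndepOn.exists_private_neighbor {M : Finset V} (hM : MaxIndepOn G W M) (hvM : v ∈ M)
    (hwc : WellCoveredOn G W) (hwcv : WellCoveredOn G (W \ {v}))
    (hα : indepNumOn G (W \ {v}) = indepNumOn G W) :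
    ∃ u ∈ W, u ∉ M ∧ G.Adj u v ∧ ∀ x ∈ M, x ≠ v → ¬ G.Adj u x := by
  classical
  have hnotmax : ¬ MaxIndepOn G (W \ {v}) (M.erase v) := fun h => by
    have hcard := hwcv _ h
    rw [hα, ← hwc M hM, Finset.card_erase_of_mem hvM] at hcard
    have := Finset.card_pos.2 ⟨v, hvM⟩
    omega
  have hind : IsIndepOn G (W \ {v}) (M.erase v : Set V) := by
    rw [Finset.coe_erase]
    exact ⟨sdiff_subset_sdiff_left hM.1.1, fun x hx y hy => hM.1.2 hx.1 hy.1⟩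
  by_contra! hno
  refine hnotmax ⟨hind, fun u hu hue hins => ?_⟩
  have huM : u ∉ M := fun h => hue (Finset.mem_erase.2 ⟨hu.2, h⟩)
  have hu_erase : ∀ x ∈ M, x ≠ v → ¬ G.Adj u x := fun x hx hxv =>
    (isIndepOn_insert.1 hins).2.2 x (Finset.mem_erase.2 ⟨hxv, hx⟩)
  obtain ⟨x, hx, hux⟩ := hM.exists_adj hu.1 huM
  obtain rfl : x = v := by_contra fun hxv => hu_erase x hx hxv hux
  obtain ⟨y, hy, hyv, huy⟩ := hno u hu.1 huM hux
  exact hu_erase y hy hyv huy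

lemma MaxIndepOn.adj_of_maxIndepOn_GDel_pair {S : Finset V}
    (hS : MaxIndepOn G (GDel G {a, b}) S) (hab : G.Adj a b) (hxa : x ≠ a) (hax : ¬ G.Adj a x)
    (hxS : x ∉ S) (hxS' : ∀ s ∈ S, ¬ G.Adj x s) : G.Adj b x := by
  by_contra hbx
  have hxb : x ≠ b := fun h => hax (h ▸ hab)
  obtain ⟨s, hs, hxs⟩ := hS.exists_adj (mem_GDel_pair.2 ⟨hxa, hxb, hax, hbx⟩) hxS
  exact hxS' s hs hxs

lemma maxIndepOn_insert_of_maxIndepOn_GDel_pair [Finite V] [DecidableEq V] (h2 : W2 G)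
    (hloc : LocallyTriangleFree G) (hab : G.Adj a b) {S : Finset V}
    (hS : MaxIndepOn G (GDel G {a, b}) S) (hSne : S.Nonempty) :
    MaxIndepOn G (univ \ {b}) (insert a S) := by
  obtain ⟨-, hwc, hdel⟩ := h2
  have hmem : ∀ x ∈ S, x ≠ a ∧ x ≠ b ∧ ¬ G.Adj a x ∧ ¬ G.Adj b x := fun x hx =>
    mem_GDel_pair.1 (hS.1.1 hx)
  have hindep : IsIndepOn G (univ \ {b}) (insert a S : Finset V) := by
    rw [Finset.coe_insert]
    exact isIndepOn_insert.2 ⟨by simpa using hab.ne,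
      IsIndepOn.mono hS.1 fun x hx => by simpa using (mem_GDel_pair.1 hx).2.1,
      fun x hx => (hmem x hx).2.2.1⟩
  refine ⟨hindep, fun v hv hvaS hins => ?_⟩
  have hva : v ≠ a := fun h => hvaS (by simp [h])
  have hvS : v ∉ S := fun h => hvaS (Finset.mem_insert_of_mem h)
  have hv_nadj := (isIndepOn_insert.1 hins).2.2
  have hvS' : ∀ s ∈ S, ¬ G.Adj v s := fun s hs => hv_nadj s (by simp [hs])
  have hbv := hS.adj_of_maxIndepOn_GDel_pair hab hva (fun h => hv_nadj a (by simp) h.symm) hvS hvS'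
  rw [← Finset.coe_insert] at hins
  obtain ⟨M, hvaSM, hM⟩ := exists_maxIndepOn_superset (hins.mono (subset_univ _))
  obtain ⟨u, -, huM, huv, hu⟩ := hM.exists_private_neighbor (hvaSM (Finset.mem_insert_self _ _))
    hwc (hdel v trivial).1 (hdel v trivial).2
  have haM : a ∈ M := hvaSM (by simp)
  have hSM : S ⊆ M := fun s hs => hvaSM (by simp [hs])
  have hua : ¬ G.Adj u a := hu a haM hva.symm
  have huS : ∀ s ∈ S, ¬ G.Adj u s := fun s hs => hu s (hSM hs) fun h => hvS (h ▸ hs)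
  have hbu := hS.adj_of_maxIndepOn_GDel_pair hab (fun h => huM (by rwa [h]))
    (fun h => hua h.symm) (fun h => huM (hSM h)) huS
  obtain ⟨w, hw⟩ := hSne
  refine hloc w b ?_ u ?_ v ?_ ⟨hbu, huv, hbv⟩
  · exact mem_GDel_singleton.2 ⟨(hmem w hw).2.1.symm, fun h => (hmem w hw).2.2.2 h.symm⟩
  · exact mem_GDel_singleton.2 ⟨fun h => huM (h ▸ hSM hw), fun h => huS w hw h.symm⟩
  · exact mem_GDel_singleton.2 ⟨fun h => hvS (h ▸ hw), fun h => hvS' w hw h.symm⟩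

end

/-- For an edge `ab` of a locally triangle-free graph in `W₂`, the graph
`G_{ab}` is either empty or well-covered with `α(G_{ab}) = α(G) - 1`. -/
theorem stmt_6 [Fintype V] (G : SimpleGraph V) (h2 : W2 G)
    (hloc : LocallyTriangleFree G) {a b : V} (hab : G.Adj a b) :
    GDel G {a, b} = ∅ ∨
      (WellCoveredOn G (GDel G {a, b}) ∧
        indepNumOn G (GDel G {a, b}) = indepNum G - 1) := by
  classical
  refine or_iff_not_imp_left.2 fun hne => wellCoveredOn_of_forall_card_eq fun S hS => ?_
  have haS : a ∉ S := fun h => (mem_GDel_pair.1 (hS.1.1 h)).1 rfl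
  have hdel_b := h2.2.2 b trivial
  have hcard := hdel_b.1 _ <| maxIndepOn_insert_of_maxIndepOn_GDel_pair h2 hloc hab hS
    (hS.nonempty (nonempty_iff_ne_empty.2 hne))
  rw [hdel_b.2, Finset.card_insert_of_notMem haS] at hcard
  exact Nat.eq_sub_of_add_eq hcard
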